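/- arXiv:2506.22203 — 5 statements merged into one kernel-verified Lean document; each statement's English description precedes it below -/
import Mathlib

section
/- The smooth-fit conditions determine the free boundary and the constant uniquely: if x* ∈ ℝ and D ∈ ℝ are such that the function g(x) = K₁·e^{a·x} + D·e^{λ₂·x} satisfies g′(x*) = c and g″(x*) = 0, then x* = x̂ and D = C₂. -/
open Real

lemma deriv_const_mul_exp_add_const_mul_exp (p q k l : ℝ) :
    deriv (fun x => p * exp (k * x) + q * exp (l * x))
      = fun x => (p * k) * exp (k * x) + (q * l) * exp (l * x) := by
  funext x
  have hexp (m : ℝ) : HasDerivAt (fun x => exp (m * x)) (exp (m * x) * m) x := by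
    simpa using ((hasDerivAt_id x).const_mul m).exp
  exact ((((hexp k).const_mul p).add ((hexp l).const_mul q)).congr_deriv (by ring)).deriv

/-- `a` lies strictly between the roots of `σ²λ²/2 + μλ - β`, the characteristic polynomial of
the generator, since it is negative at `a`. -/
lemma lt_larger_root_of_neg {μ σ β a : ℝ} (hσ : 0 < σ) (h : μ * a + (1/2) * σ^2 * a^2 < β) :
    a < (-μ + √(μ^2 + 2*β*σ^2)) / σ^2 := by
  rw [lt_div_iff₀ (by positivity)]
  have hdisc : (a * σ^2 + μ)^2 < μ^2 + 2*β*σ^2 := by nlinarith [pow_pos hσ 2]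
  linarith [Real.lt_sqrt_of_sq_lt hdisc]

lemma exp_eq_of_smooth_fit {K D a l c δ x : ℝ} (hKδ : K * δ = 1) (hla : l * a - a^2 ≠ 0)
    (h1 : K * a * exp (a * x) + D * l * exp (l * x) = c)
    (h2 : K * a * a * exp (a * x) + D * l * l * exp (l * x) = 0) :
    exp (a * x) = l * c * δ / (l * a - a^2) := by
  rw [eq_div_iff hla]
  linear_combination l * δ * h1 - δ * h2 - (l * a - a^2) * exp (a * x) * hKδ

lemma coeff_eq_of_smooth_fit {K D a l δ x : ℝ} (hKδ : K * δ = 1) (hl : l ≠ 0)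
    (h2 : K * a * a * exp (a * x) + D * l * l * exp (l * x) = 0) :
    D = -(a^2 / (l^2 * δ)) * exp ((a - l) * x) := by
  have hδ : δ ≠ 0 := right_ne_zero_of_mul_eq_one hKδ
  rw [sub_mul, exp_sub]
  field_simp
  linear_combination δ * h2 - a^2 * exp (a * x) * hKδ

theorem stmt_4_general
    (μ σ c a β : ℝ)
    (hσ : σ > 0) (ha : a > 0)
    (hβ' : β > μ * a + (1/2) * σ^2 * a^2)
    (lam₂ K₁ xhat C₂ : ℝ)
    (hlam₂ : lam₂ = (-μ + Real.sqrt (μ^2 + 2*β*σ^2)) / σ^2)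
    (hK₁ : K₁ = 1 / (β - μ*a - (1/2)*σ^2*a^2))
    (hxhat : xhat = (1/a) * Real.log (lam₂*c*(β - μ*a - (1/2)*σ^2*a^2) / (lam₂*a - a^2)))
    (hC₂ : C₂ = -(a^2 / (lam₂^2 * (β - μ*a - (1/2)*σ^2*a^2))) * Real.exp ((a - lam₂) * xhat))
    :
    ∀ xstar D : ℝ,
      deriv (fun x => K₁ * Real.exp (a*x) + D * Real.exp (lam₂*x)) xstar = c →
      deriv (deriv (fun x => K₁ * Real.exp (a*x) + D * Real.exp (lam₂*x))) xstar = 0 →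
      xstar = xhat ∧ D = C₂ := by
  intro xstar D h1 h2
  simp only [deriv_const_mul_exp_add_const_mul_exp] at h1 h2
  have hKδ : K₁ * (β - μ*a - (1/2)*σ^2*a^2) = 1 := by
    rw [hK₁, one_div_mul_cancel]; linarith
  have hla : a < lam₂ := hlam₂ ▸ lt_larger_root_of_neg hσ hβ'
  have hx : xstar = xhat := by
    rw [hxhat, ← exp_eq_of_smooth_fit hKδ (by nlinarith) h1 h2, log_exp]
    field_simp
  exact ⟨hx, hC₂ ▸ hx ▸ coeff_eq_of_smooth_fit hKδ (ha.trans hla).ne' h2⟩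

theorem stmt_4
    (μ σ c a β : ℝ)
    (hσ : σ > 0) (hc : c > 0) (ha : a > 0) (hβ : β > 0)
    (hβ' : β > μ * a + (1/2) * σ^2 * a^2)
    (lam₁ lam₂ K₁ xhat C₂ : ℝ)
    (hlam₁ : lam₁ = (-μ - Real.sqrt (μ^2 + 2*β*σ^2)) / σ^2)
    (hlam₂ : lam₂ = (-μ + Real.sqrt (μ^2 + 2*β*σ^2)) / σ^2)
    (hK₁ : K₁ = 1 / (β - μ*a - (1/2)*σ^2*a^2))
    (hxhat : xhat = (1/a) * Real.log (lam₂*c*(β - μ*a - (1/2)*σ^2*a^2) / (lam₂*a - a^2)))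
    (hC₂ : C₂ = -(a^2 / (lam₂^2 * (β - μ*a - (1/2)*σ^2*a^2))) * Real.exp ((a - lam₂) * xhat))
    :
    ∀ xstar D : ℝ,
      deriv (fun x => K₁ * Real.exp (a*x) + D * Real.exp (lam₂*x)) xstar = c →
      deriv (deriv (fun x => K₁ * Real.exp (a*x) + D * Real.exp (lam₂*x))) xstar = 0 →
      xstar = xhat ∧ D = C₂ :=
  stmt_4_general μ σ c a β hσ ha hβ' lam₂ K₁ xhat C₂ hlam₂ hK₁ hxhat hC₂
end

section
/- The function K₂ is strictly decreasing on (−∞, x̂] and strictly increasing on [x̂, ∞); consequently x̂ is the unique global minimizer of K₂ on ℝ. -/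
/-!
Writing `f z = (c - k e^{a z}) / (l e^{l z})`, the quotient rule gives
`f' z = (k (l - a) e^{a z} - l c) / (l e^{l z})`. When `0 < a < l` and `k > 0` the numerator is
strictly increasing in `z` and vanishes exactly where `e^{a z} = l c / (k (l - a))`, which for
`K₂` (with `k = K₁ a`, `l = λ₂`) is the point `x̂`. The condition `β > μ a + σ² a² / 2` says the
characteristic polynomial `σ² λ² / 2 + μ λ - β` is negative at `a`, so `a < λ₂`.
-/

open Real Set

theorem strictAntiOn_Iic_strictMonoOn_Ici_of_deriv_sign {f : ℝ → ℝ} {x : ℝ}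
    (hf : Differentiable ℝ f) (hneg : ∀ z < x, deriv f z < 0)
    (hpos : ∀ z, x < z → 0 < deriv f z) :
    StrictAntiOn f (Iic x) ∧ StrictMonoOn f (Ici x) ∧ ∀ z ≠ x, f x < f z := by
  have hanti : StrictAntiOn f (Iic x) :=
    strictAntiOn_of_deriv_neg (convex_Iic x) hf.continuous.continuousOn
      fun z hz => hneg z (by rwa [interior_Iic] at hz)
  have hmono : StrictMonoOn f (Ici x) :=
    strictMonoOn_of_deriv_pos (convex_Ici x) hf.continuous.continuousOn
      fun z hz => hpos z (by rwa [interior_Ici] at hz)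
  refine ⟨hanti, hmono, fun z hz => ?_⟩
  rcases hz.lt_or_gt with h | h
  · exact hanti h.le self_mem_Iic h
  · exact hmono self_mem_Ici h.le h

theorem hasDerivAt_sub_mul_exp_div_mul_exp (c k a l z : ℝ) (hl : l ≠ 0) :
    HasDerivAt (fun z => (c - k * exp (a * z)) / (l * exp (l * z)))
      ((k * (l - a) * exp (a * z) - l * c) / (l * exp (l * z))) z := by
  have hnum : HasDerivAt (fun z => c - k * exp (a * z)) (-(k * (exp (a * z) * a))) z :=
    (((hasDerivAt_id z).const_mul a).exp.const_mul k).const_sub c |>.congr_deriv (by simp)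
  have hden : HasDerivAt (fun z => l * exp (l * z)) (l * (exp (l * z) * l)) z :=
    (((hasDerivAt_id z).const_mul l).exp.const_mul l).congr_deriv (by simp)
  refine (hnum.div hden (by positivity)).congr_deriv ?_
  field_simp
  ring

theorem exp_mul_inv_mul_log {a y : ℝ} (ha : a ≠ 0) (hy : 0 < y) :
    exp (a * ((1 / a) * log y)) = y := by
  rw [← mul_assoc, mul_one_div_cancel ha, one_mul, exp_log hy]

theorem strictAntiOn_Iic_strictMonoOn_Ici_of_sub_mul_exp_div_mul_exp {f : ℝ → ℝ}
    {c k a l x : ℝ} (hf : ∀ z, f z = (c - k * exp (a * z)) / (l * exp (l * z)))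
    (ha : 0 < a) (hl : 0 < l) (hkl : 0 < k * (l - a)) (hx : k * (l - a) * exp (a * x) = l * c) :
    StrictAntiOn f (Iic x) ∧ StrictMonoOn f (Ici x) ∧ ∀ z ≠ x, f x < f z := by
  obtain rfl : f = fun z => (c - k * exp (a * z)) / (l * exp (l * z)) := funext hf
  have hderiv z := hasDerivAt_sub_mul_exp_div_mul_exp c k a l z hl.ne'
  apply strictAntiOn_Iic_strictMonoOn_Ici_of_deriv_sign fun z => (hderiv z).differentiableAt
  · intro z hz
    rw [(hderiv z).deriv]
    refine div_neg_of_neg_of_pos ?_ (by positivity)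
    have : exp (a * z) < exp (a * x) := exp_lt_exp.2 (mul_lt_mul_of_pos_left hz ha)
    nlinarith
  · intro z hz
    rw [(hderiv z).deriv]
    refine div_pos ?_ (by positivity)
    have : exp (a * x) < exp (a * z) := exp_lt_exp.2 (mul_lt_mul_of_pos_left hz ha)
    nlinarith

theorem lt_neg_add_sqrt_div {μ σ β a : ℝ} (hσ : 0 < σ) (h : μ * a + 1 / 2 * σ ^ 2 * a ^ 2 < β) :
    a < (-μ + √(μ ^ 2 + 2 * β * σ ^ 2)) / σ ^ 2 := by
  have hσ2 : 0 < σ ^ 2 := by positivity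
  have hsq : (μ + σ ^ 2 * a) ^ 2 < μ ^ 2 + 2 * β * σ ^ 2 := by
    nlinarith [mul_lt_mul_of_pos_left h hσ2]
  rw [lt_div_iff₀ hσ2]
  linarith [lt_sqrt_of_sq_lt hsq]

theorem stmt_10_general
    (μ σ c a β : ℝ)
    (hσ : σ > 0) (hc : c > 0) (ha : a > 0)
    (hβ' : β > μ * a + (1/2) * σ^2 * a^2)
    (lam₂ K₁ xhat : ℝ)
    (hlam₂ : lam₂ = (-μ + Real.sqrt (μ^2 + 2*β*σ^2)) / σ^2)
    (hK₁ : K₁ = 1 / (β - μ*a - (1/2)*σ^2*a^2))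
    (hxhat : xhat = (1/a) * Real.log (lam₂*c*(β - μ*a - (1/2)*σ^2*a^2) / (lam₂*a - a^2)))
    (K₂ : ℝ → ℝ)
    (hK₂ : ∀ z, K₂ z = (c - K₁*a*Real.exp (a*z)) / (lam₂ * Real.exp (lam₂*z)))
    :
    StrictAntiOn K₂ (Set.Iic xhat) ∧
    StrictMonoOn K₂ (Set.Ici xhat) ∧
    (∀ z : ℝ, z ≠ xhat → K₂ xhat < K₂ z) := by
  have hlam : a < lam₂ := hlam₂ ▸ lt_neg_add_sqrt_div hσ hβ'
  have hlam_pos : 0 < lam₂ := ha.trans hlam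
  have hlam_sub : 0 < lam₂ - a := sub_pos.2 hlam
  have hD : 0 < β - μ*a - (1/2)*σ^2*a^2 := by linarith
  set D := β - μ*a - (1/2)*σ^2*a^2
  have hkl : 0 < K₁ * a * (lam₂ - a) := by rw [hK₁]; positivity
  have hx : K₁ * a * (lam₂ - a) * exp (a * xhat) = lam₂ * c := by
    have hden : lam₂ * a - a ^ 2 = a * (lam₂ - a) := by ring
    rw [hxhat, hden, exp_mul_inv_mul_log ha.ne' (by positivity), hK₁]
    field_simp
  exact strictAntiOn_Iic_strictMonoOn_Ici_of_sub_mul_exp_div_mul_exp hK₂ ha hlam_pos hkl hx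

theorem stmt_10
    (μ σ c a β : ℝ)
    (hσ : σ > 0) (hc : c > 0) (ha : a > 0) (hβ : β > 0)
    (hβ' : β > μ * a + (1/2) * σ^2 * a^2)
    (lam₁ lam₂ K₁ xhat C₂ : ℝ)
    (hlam₁ : lam₁ = (-μ - Real.sqrt (μ^2 + 2*β*σ^2)) / σ^2)
    (hlam₂ : lam₂ = (-μ + Real.sqrt (μ^2 + 2*β*σ^2)) / σ^2)
    (hK₁ : K₁ = 1 / (β - μ*a - (1/2)*σ^2*a^2))
    (hxhat : xhat = (1/a) * Real.log (lam₂*c*(β - μ*a - (1/2)*σ^2*a^2) / (lam₂*a - a^2)))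
    (hC₂ : C₂ = -(a^2 / (lam₂^2 * (β - μ*a - (1/2)*σ^2*a^2))) * Real.exp ((a - lam₂) * xhat))
    (K₂ : ℝ → ℝ)
    (hK₂ : ∀ z, K₂ z = (c - K₁*a*Real.exp (a*z)) / (lam₂ * Real.exp (lam₂*z)))
    :
    StrictAntiOn K₂ (Set.Iic xhat) ∧
    StrictMonoOn K₂ (Set.Ici xhat) ∧
    (∀ z : ℝ, z ≠ xhat → K₂ xhat < K₂ z) :=
  stmt_10_general μ σ c a β hσ hc ha hβ' lam₂ K₁ xhat hlam₂ hK₁ hxhat K₂ hK₂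
end

section
/- Let κ < 0 be a real constant and suppose x′ < x″ are two distinct real solutions of the equation K₁·a·e^{a·x} + κ·λ₂·e^{λ₂·x} = c. Then x′ < x̂ < x″ (any two distinct crossings of the level c straddle the optimal free boundary x̂). -/
open Real Set

/-!
Multiplying `f x - c`, where `f x = K₁ a e^{a x} + κ λ₂ e^{λ₂ x}`, by `e^{-λ₂ x}` turns the term
`κ λ₂ e^{λ₂ x}` into a constant, so the tilted function has derivative
`e^{-λ₂ x} (c λ₂ - K₁ a (λ₂ - a) e^{a x})`. Since `a < λ₂`, this is positive left of `x̂` and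
negative right of it: the tilted function is strictly unimodal with peak at `x̂`, and two distinct
zeros must lie on opposite sides of the peak.
-/

theorem lt_and_lt_of_apply_eq_of_strictMonoOn_of_strictAntiOn {α β : Type*} [LinearOrder α]
    [Preorder β] {f : α → β} {m x y : α} (hmono : StrictMonoOn f (Iic m))
    (hanti : StrictAntiOn f (Ici m)) (hxy : x < y) (hf : f x = f y) : x < m ∧ m < y := by
  constructor
  · by_contra! hmx
    exact (hanti hmx (hmx.trans hxy.le) hxy).ne' hf
  · by_contra! hym
    exact (hmono (hxy.le.trans hym) hym hxy).ne hf

theorem lt_div_of_mul_add_half_mul_sq_lt {μ σ a β : ℝ} (hσ : σ ≠ 0)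
    (h : μ * a + (1/2) * σ^2 * a^2 < β) : a < (-μ + √(μ^2 + 2*β*σ^2)) / σ^2 := by
  have hσ2 : 0 < σ^2 := by positivity
  have hsq : (μ + σ^2*a)^2 < μ^2 + 2*β*σ^2 := by nlinarith
  have hsqrt : μ + σ^2*a < √(μ^2 + 2*β*σ^2) := Real.lt_sqrt_of_sq_lt hsq
  rw [lt_div_iff₀ hσ2]
  linarith

noncomputable def tiltedExcess (A D c a lam x : ℝ) : ℝ :=
  exp (-(lam * x)) * (A * exp (a * x) + D * exp (lam * x) - c)

section TiltedExcess

variable {A D c a lam : ℝ}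

theorem hasDerivAt_tiltedExcess (x : ℝ) :
    HasDerivAt (tiltedExcess A D c a lam)
      (exp (-(lam * x)) * (c * lam - A * (lam - a) * exp (a * x))) x := by
  have hlin (k : ℝ) : HasDerivAt (fun x => k * x) k x := by
    simpa using (hasDerivAt_id x).const_mul k
  have hsum := (((hlin a).exp.const_mul A).fun_add ((hlin lam).exp.const_mul D)).sub_const c
  exact ((hlin lam).fun_neg.exp.fun_mul hsum).congr_deriv (by ring)

theorem deriv_tiltedExcess (x : ℝ) :
    deriv (tiltedExcess A D c a lam) x
      = exp (-(lam * x)) * (c * lam - A * (lam - a) * exp (a * x)) :=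
  (hasDerivAt_tiltedExcess x).deriv

theorem continuous_tiltedExcess : Continuous (tiltedExcess A D c a lam) :=
  continuous_iff_continuousAt.2 fun x => (hasDerivAt_tiltedExcess x).continuousAt

variable {xhat : ℝ}

theorem strictMonoOn_tiltedExcess (ha : 0 < a) (hA : 0 < A * (lam - a))
    (hpeak : A * (lam - a) * exp (a * xhat) = c * lam) :
    StrictMonoOn (tiltedExcess A D c a lam) (Iic xhat) := by
  refine strictMonoOn_of_deriv_pos (convex_Iic _) continuous_tiltedExcess.continuousOn ?_
  intro x hx
  rw [interior_Iic, mem_Iio] at hx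
  have : exp (a * x) < exp (a * xhat) := exp_lt_exp.2 (by gcongr)
  rw [deriv_tiltedExcess]
  exact mul_pos (exp_pos _) (by nlinarith)

theorem strictAntiOn_tiltedExcess (ha : 0 < a) (hA : 0 < A * (lam - a))
    (hpeak : A * (lam - a) * exp (a * xhat) = c * lam) :
    StrictAntiOn (tiltedExcess A D c a lam) (Ici xhat) := by
  refine strictAntiOn_of_deriv_neg (convex_Ici _) continuous_tiltedExcess.continuousOn ?_
  intro x hx
  rw [interior_Ici, mem_Ioi] at hx
  have : exp (a * xhat) < exp (a * x) := exp_lt_exp.2 (by gcongr)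
  rw [deriv_tiltedExcess]
  exact mul_neg_of_pos_of_neg (exp_pos _) (by nlinarith)

end TiltedExcess

theorem stmt_13_general
    (μ σ c a β : ℝ)
    (hσ : σ > 0) (hc : c > 0) (ha : a > 0)
    (hβ' : β > μ * a + (1/2) * σ^2 * a^2)
    (lam₂ K₁ xhat : ℝ)
    (hlam₂ : lam₂ = (-μ + Real.sqrt (μ^2 + 2*β*σ^2)) / σ^2)
    (hK₁ : K₁ = 1 / (β - μ*a - (1/2)*σ^2*a^2))
    (hxhat : xhat = (1/a) * Real.log (lam₂*c*(β - μ*a - (1/2)*σ^2*a^2) / (lam₂*a - a^2)))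
    :
    ∀ κ : ℝ, κ < 0 →
      ∀ x' x'' : ℝ, x' < x'' →
        K₁*a*Real.exp (a*x') + κ*lam₂*Real.exp (lam₂*x') = c →
        K₁*a*Real.exp (a*x'') + κ*lam₂*Real.exp (lam₂*x'') = c →
        x' < xhat ∧ xhat < x'' := by
  intro κ _ x' x'' hlt h' h''
  set E := β - μ*a - (1/2)*σ^2*a^2
  have hE : 0 < E := by dsimp only [E]; linarith
  have hgap : 0 < lam₂ - a := sub_pos.2 (hlam₂ ▸ lt_div_of_mul_add_half_mul_sq_lt hσ.ne' hβ')
  have hA : 0 < K₁ * a * (lam₂ - a) := by rw [hK₁]; positivity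
  have hpeak : K₁ * a * (lam₂ - a) * exp (a * xhat) = c * lam₂ := by
    have hlam₂a : lam₂*a - a^2 = a * (lam₂ - a) := by ring
    rw [hxhat, ← mul_assoc, mul_one_div_cancel ha.ne', one_mul, hlam₂a,
      exp_log (div_pos (mul_pos (mul_pos (ha.trans (sub_pos.1 hgap)) hc) hE)
        (mul_pos ha hgap)), hK₁]
    field_simp
  have hzero {x : ℝ} (hx : K₁*a*exp (a*x) + κ*lam₂*exp (lam₂*x) = c) :
      tiltedExcess (K₁ * a) (κ * lam₂) c a lam₂ x = 0 := by
    simp only [tiltedExcess, hx, sub_self, mul_zero]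
  exact lt_and_lt_of_apply_eq_of_strictMonoOn_of_strictAntiOn
    (strictMonoOn_tiltedExcess ha hA hpeak) (strictAntiOn_tiltedExcess ha hA hpeak) hlt
    ((hzero h').trans (hzero h'').symm)

theorem stmt_13
    (μ σ c a β : ℝ)
    (hσ : σ > 0) (hc : c > 0) (ha : a > 0) (hβ : β > 0)
    (hβ' : β > μ * a + (1/2) * σ^2 * a^2)
    (lam₁ lam₂ K₁ xhat C₂ : ℝ)
    (hlam₁ : lam₁ = (-μ - Real.sqrt (μ^2 + 2*β*σ^2)) / σ^2)
    (hlam₂ : lam₂ = (-μ + Real.sqrt (μ^2 + 2*β*σ^2)) / σ^2)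
    (hK₁ : K₁ = 1 / (β - μ*a - (1/2)*σ^2*a^2))
    (hxhat : xhat = (1/a) * Real.log (lam₂*c*(β - μ*a - (1/2)*σ^2*a^2) / (lam₂*a - a^2)))
    (hC₂ : C₂ = -(a^2 / (lam₂^2 * (β - μ*a - (1/2)*σ^2*a^2))) * Real.exp ((a - lam₂) * xhat))
    :
    ∀ κ : ℝ, κ < 0 →
      ∀ x' x'' : ℝ, x' < x'' →
        K₁*a*Real.exp (a*x') + κ*lam₂*Real.exp (lam₂*x') = c →
        K₁*a*Real.exp (a*x'') + κ*lam₂*Real.exp (lam₂*x'') = c →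
        x' < xhat ∧ xhat < x'' :=
  stmt_13_general μ σ c a β hσ hc ha hβ' lam₂ K₁ xhat hlam₂ hK₁ hxhat
end

section
/- If z ∈ ℝ satisfies K₂(z) < 0 and z is the unique real solution x of the equation K₁·a·e^{a·x} + K₂(z)·λ₂·e^{λ₂·x} = c, then z = x̂. -/
/-! Write `G x = K₁ a e^{a x} + K₂(z) λ₂ e^{λ₂ x}`. Since `0 < a < λ₂` and `K₂(z) < 0`, `G` tends
to `0 < c` at `-∞` and to `-∞` at `+∞`, so by the intermediate value theorem a level `c` that is
attained exactly once must be the maximum of `G`. Hence `G'(z) = 0` as well as `G(z) = c`, and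
eliminating `K₂(z)` from these two equations gives `e^{a z} = λ₂ c / (K₁ a (λ₂ - a))`, i.e. `z = x̂`. -/

open Real Filter Topology

theorem le_of_unique_solution {f : ℝ → ℝ} {c z : ℝ} (hf : Continuous f)
    (hbot : ∀ᶠ x in atBot, f x < c) (htop : ∀ᶠ x in atTop, f x < c)
    (huniq : ∀ x, f x = c → x = z) (x : ℝ) : f x ≤ c := by
  by_contra! hx
  obtain ⟨X, hXc, hXx⟩ := (hbot.and (eventually_lt_atBot x)).exists
  obtain ⟨Y, hYc, hYx⟩ := (htop.and (eventually_gt_atTop x)).exists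
  obtain ⟨y, ⟨-, hyx⟩, hy⟩ :=
    intermediate_value_Icc hXx.le hf.continuousOn ⟨hXc.le, hx.le⟩
  obtain ⟨y', ⟨hxy', -⟩, hy'⟩ :=
    intermediate_value_Icc' hYx.le hf.continuousOn ⟨hYc.le, hx.le⟩
  have hyz := huniq y hy
  have hxy : x = y := le_antisymm (hyz ▸ huniq y' hy' ▸ hxy') hyx
  exact hx.ne' (hxy ▸ hy)

theorem hasDerivAt_eq_zero_of_unique_solution {f : ℝ → ℝ} {f' c z : ℝ} (hf : Continuous f)
    (hd : HasDerivAt f f' z) (hbot : ∀ᶠ x in atBot, f x < c) (htop : ∀ᶠ x in atTop, f x < c)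
    (hz : f z = c) (huniq : ∀ x, f x = c → x = z) : f' = 0 :=
  IsLocalMax.hasDerivAt_eq_zero
    (Eventually.of_forall fun x => hz ▸ le_of_unique_solution hf hbot htop huniq x) hd

section TwoExponentials

variable {p q a b : ℝ}

theorem hasDerivAt_two_exp (x : ℝ) :
    HasDerivAt (fun x => p * exp (a * x) + q * exp (b * x))
      (p * a * exp (a * x) + q * b * exp (b * x)) x := by
  have hexp (k : ℝ) : HasDerivAt (fun x => exp (k * x)) (exp (k * x) * k) x :=
    ((hasDerivAt_id x).const_mul k).exp.congr_deriv (by simp)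
  exact (((hexp a).const_mul p).add ((hexp b).const_mul q)).congr_deriv (by ring)

theorem continuous_two_exp : Continuous fun x => p * exp (a * x) + q * exp (b * x) := by
  fun_prop

theorem tendsto_two_exp_atBot (ha : 0 < a) (hb : 0 < b) :
    Tendsto (fun x => p * exp (a * x) + q * exp (b * x)) atBot (𝓝 0) := by
  have hexp {k : ℝ} (hk : 0 < k) : Tendsto (fun x => exp (k * x)) atBot (𝓝 0) :=
    tendsto_exp_atBot.comp (tendsto_id.const_mul_atBot hk)
  simpa using ((hexp ha).const_mul p).add ((hexp hb).const_mul q)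

theorem tendsto_two_exp_atTop (hab : a < b) (hb : 0 < b) (hq : q < 0) :
    Tendsto (fun x => p * exp (a * x) + q * exp (b * x)) atTop atBot := by
  have hfactor : (fun x => exp (b * x) * (p * exp ((a - b) * x) + q)) =
      fun x => p * exp (a * x) + q * exp (b * x) := by
    ext x
    rw [mul_add, mul_left_comm, ← exp_add]
    ring_nf
  have hbig : Tendsto (fun x => exp (b * x)) atTop atTop :=
    tendsto_exp_atTop.comp (tendsto_id.const_mul_atTop hb)
  have hsmall : Tendsto (fun x => p * exp ((a - b) * x) + q) atTop (𝓝 q) := by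
    have hdecay : Tendsto (fun x => exp ((a - b) * x)) atTop (𝓝 0) :=
      tendsto_exp_atBot.comp (tendsto_id.const_mul_atTop_of_neg (sub_neg.mpr hab))
    simpa using (hdecay.const_mul p).add_const q
  exact hfactor ▸ hbig.atTop_mul_neg hq hsmall

end TwoExponentials

theorem lt_larger_root_of_quadratic_neg {μ σ a β : ℝ} (hσ : σ > 0) (hβ' : β > μ * a + (1/2) * σ^2 * a^2) :
    a < (-μ + √(μ^2 + 2*β*σ^2)) / σ^2 := by
  have hgap : 0 < σ^2 * (2*β - 2*μ*a - σ^2*a^2) := mul_pos (by positivity) (by linarith)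
  have hs := sq_sqrt (show 0 ≤ μ^2 + 2*β*σ^2 by nlinarith [sq_nonneg (μ + a*σ^2)])
  rw [lt_div_iff₀ (by positivity)]
  nlinarith [sqrt_nonneg (μ^2 + 2*β*σ^2)]

theorem stmt_14_general
    (μ σ c a β : ℝ)
    (hσ : σ > 0) (hc : c > 0) (ha : a > 0)
    (hβ' : β > μ * a + (1/2) * σ^2 * a^2)
    (lam₂ K₁ xhat : ℝ)
    (hlam₂ : lam₂ = (-μ + Real.sqrt (μ^2 + 2*β*σ^2)) / σ^2)
    (hK₁ : K₁ = 1 / (β - μ*a - (1/2)*σ^2*a^2))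
    (hxhat : xhat = (1/a) * Real.log (lam₂*c*(β - μ*a - (1/2)*σ^2*a^2) / (lam₂*a - a^2)))
    (K₂ : ℝ → ℝ)
    :
    ∀ z : ℝ, K₂ z < 0 →
      (K₁*a*Real.exp (a*z) + K₂ z * lam₂ * Real.exp (lam₂*z) = c) →
      (∀ x : ℝ, K₁*a*Real.exp (a*x) + K₂ z * lam₂ * Real.exp (lam₂*x) = c → x = z) →
      z = xhat := by
  intro z hneg heq huniq
  have hlt : a < lam₂ := hlam₂ ▸ lt_larger_root_of_quadratic_neg hσ hβ'
  have hpos : 0 < lam₂ := ha.trans hlt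
  have hD : 0 < β - μ*a - (1/2)*σ^2*a^2 := by linarith
  have hK₁D : K₁ * (β - μ*a - (1/2)*σ^2*a^2) = 1 := by rw [hK₁, one_div_mul_cancel hD.ne']
  have hcrit := hasDerivAt_eq_zero_of_unique_solution continuous_two_exp (hasDerivAt_two_exp z)
    ((tendsto_two_exp_atBot ha hpos).eventually (eventually_lt_nhds hc))
    ((tendsto_two_exp_atTop hlt hpos (mul_neg_of_neg_of_pos hneg hpos)).eventually
      (eventually_lt_atBot c)) heq huniq
  have hexp : exp (a*z) = lam₂*c*(β - μ*a - (1/2)*σ^2*a^2) / (lam₂*a - a^2) := by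
    rw [eq_div_iff (by nlinarith)]
    linear_combination (lam₂*(β - μ*a - (1/2)*σ^2*a^2)) * heq
      - (β - μ*a - (1/2)*σ^2*a^2) * hcrit - (a*lam₂ - a^2) * exp (a*z) * hK₁D
  rw [hxhat, ← hexp, log_exp]
  field_simp

theorem stmt_14
    (μ σ c a β : ℝ)
    (hσ : σ > 0) (hc : c > 0) (ha : a > 0) (hβ : β > 0)
    (hβ' : β > μ * a + (1/2) * σ^2 * a^2)
    (lam₁ lam₂ K₁ xhat C₂ : ℝ)
    (hlam₁ : lam₁ = (-μ - Real.sqrt (μ^2 + 2*β*σ^2)) / σ^2)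
    (hlam₂ : lam₂ = (-μ + Real.sqrt (μ^2 + 2*β*σ^2)) / σ^2)
    (hK₁ : K₁ = 1 / (β - μ*a - (1/2)*σ^2*a^2))
    (hxhat : xhat = (1/a) * Real.log (lam₂*c*(β - μ*a - (1/2)*σ^2*a^2) / (lam₂*a - a^2)))
    (hC₂ : C₂ = -(a^2 / (lam₂^2 * (β - μ*a - (1/2)*σ^2*a^2))) * Real.exp ((a - lam₂) * xhat))
    (K₂ : ℝ → ℝ)
    (hK₂ : ∀ z, K₂ z = (c - K₁*a*Real.exp (a*z)) / (lam₂ * Real.exp (lam₂*z)))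
    :
    ∀ z : ℝ, K₂ z < 0 →
      (K₁*a*Real.exp (a*z) + K₂ z * lam₂ * Real.exp (lam₂*z) = c) →
      (∀ x : ℝ, K₁*a*Real.exp (a*x) + K₂ z * lam₂ * Real.exp (lam₂*x) = c → x = z) →
      z = xhat :=
  stmt_14_general μ σ c a β hσ hc ha hβ' lam₂ K₁ xhat hlam₂ hK₁ hxhat K₂
end

section
/- For every z ∈ ℝ there exists a unique w ∈ ℝ such that the interior of the set { x ∈ ℝ : q₀(x; z) ≥ 0 and q₁(x; z) ≤ 0 } equals the open lower ray (−∞, w). Moreover w > x̂ if z < x̂, w < x̂ if z > x̂, and w = x̂ if z = x̂; in other words, one step of the policy improvement iteration always produces a waiting region that is a lower ray whose boundary lies on the opposite side of x̂ (or equals x̂ at the fixed point). -/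
/-!
Write `λ = λ₂ > a` and `E = e^{a x̂}`, so that the definition of `x̂` reads `K₁ a (λ - a) E = c λ`.
For `x ≥ z`, `q₁(x; z)` is `e^{a x}` minus an affine function of `x`; it is convex, its value at
`z` has the sign of `z - x̂`, and when `z < x̂` it is also negative at `x̂`. For `x < z`,
`e^{a (z - x)} q₀(x; z)` is `c e^{a s} + (A - c) e^{(a - λ) s} - A` with `s = z - x` and
`A (λ - a) = c λ e^{a (z - x̂)}`; it vanishes at `s = 0`, is positive for `s > 0` when `z ≤ x̂`, and
when `z > x̂` it is convex and negative at `s = z - x̂`. All sign facts come from the strict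
convexity of `exp`, in the form `b (e^{a t} - 1) < a (e^{b t} - 1)` for `0 < a < b`, `t ≠ 0`.
A convex function that is negative at some point and positive further right has exactly one sign
change there, so `{q₀ ≥ 0, q₁ ≤ 0}` is a closed ray `(-∞, w]`, where `w` is the zero of `q₁` beyond
`x̂` if `z < x̂`, the zero of `q₀` below `x̂` if `z > x̂`, and `w = z` if `z = x̂`.
-/

open Real Set

lemma mul_exp_mul_sub_one_lt {a b t : ℝ} (ha : 0 < a) (hab : a < b) (ht : t ≠ 0) :
    b * (exp (a * t) - 1) < a * (exp (b * t) - 1) := by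
  have hb : 0 < b := ha.trans hab
  have h := strictConvexOn_exp.2 (mem_univ (b * t)) (mem_univ 0) (mul_ne_zero hb.ne' ht)
    (div_pos ha hb) (sub_pos.2 ((div_lt_one hb).2 hab)) (add_sub_cancel _ _)
  simp only [smul_eq_mul, mul_zero, add_zero, exp_zero, mul_one] at h
  rw [show a / b * (b * t) = a * t by field_simp] at h
  calc b * (exp (a * t) - 1) < b * (a / b * exp (b * t) + (1 - a / b) - 1) := by gcongr
    _ = a * (exp (b * t) - 1) := by field_simp; ring

lemma exp_mul_tangent_le (a y x : ℝ) : exp (a * y) * (1 + a * (x - y)) ≤ exp (a * x) := by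
  rw [show a * x = a * y + a * (x - y) by ring, exp_add]
  gcongr
  linarith [add_one_le_exp (a * (x - y))]

lemma exp_mul_tangent_lt {a y x : ℝ} (ha : a ≠ 0) (hxy : x ≠ y) :
    exp (a * y) * (1 + a * (x - y)) < exp (a * x) := by
  rw [show a * x = a * y + a * (x - y) by ring, exp_add]
  gcongr
  linarith [add_one_lt_exp (mul_ne_zero ha (sub_ne_zero.2 hxy))]

lemma convexOn_exp_mul (k : ℝ) : ConvexOn ℝ univ fun x => exp (k * x) :=
  convexOn_exp.comp_linearMap (LinearMap.mul ℝ ℝ k)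

lemma ConvexOn.neg_of_mem_openSegment {f : ℝ → ℝ} {p u x : ℝ} (hf : ConvexOn ℝ univ f)
    (hp : f p ≤ 0) (hu : f u < 0) (hx : x ∈ openSegment ℝ p u) : f x < 0 := by
  obtain ⟨α, β, hα, hβ, hαβ, rfl⟩ := hx
  calc f (α • p + β • u) ≤ α • f p + β • f u := hf.2 (mem_univ p) (mem_univ u) hα.le hβ.le hαβ
    _ < 0 := by simp only [smul_eq_mul]; nlinarith

lemma ConvexOn.exists_sign_change {f : ℝ → ℝ} {p u X : ℝ} (hf : ConvexOn ℝ univ f)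
    (hcont : Continuous f) (hp : f p ≤ 0) (hu : f u < 0) (hX : 0 < f X) (huX : u < X) :
    ∃ w, u < w ∧ f w = 0 ∧ (∀ x, p < x → x < w → f x < 0) ∧ ∀ x, w < x → 0 < f x := by
  obtain ⟨w, ⟨huw, -⟩, hw⟩ :=
    intermediate_value_Icc huX.le hcont.continuousOn ⟨hu.le, hX.le⟩
  have huw : u < w := huw.lt_of_ne (by rintro rfl; exact hu.ne hw)
  refine ⟨w, huw, hw, fun x hpx hxw => ?_, fun x hwx => ?_⟩
  · rcases lt_trichotomy x u with hxu | rfl | hux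
    · exact hf.neg_of_mem_openSegment hp hu
        (by rw [openSegment_eq_Ioo (hpx.trans hxu)]; exact ⟨hpx, hxu⟩)
    · exact hu
    · exact hf.neg_of_mem_openSegment hw.le hu
        (by rw [openSegment_symm, openSegment_eq_Ioo huw]; exact ⟨hux, hxw⟩)
  · have := hf.lt_right_of_left_lt (mem_univ u) (mem_univ x)
      (by rw [openSegment_eq_Ioo (huw.trans hwx)]; exact ⟨huw, hwx⟩) (hu.trans_eq hw.symm)
    rwa [hw] at this

/-- `q₀Reduced a λ₂ c A s = e^{a s} q₀(z - s; z)` when `A = K₁ a e^{a z}`. -/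
noncomputable def q₀Reduced (a l c A s : ℝ) : ℝ :=
  c * exp (a * s) + (A - c) * exp ((a - l) * s) - A

/-- `q₁Reduced a ρ x̂ z x = q₁(x; z)` for `x ≥ z` when
`ρ = σ² a (λ₂ - a) / (2 (β - μ a - σ² a² / 2))`. -/
noncomputable def q₁Reduced (a ρ xh z x : ℝ) : ℝ :=
  exp (a * x) - ρ * exp (a * xh) - (1 - ρ) * (exp (a * z) + a * exp (a * xh) * (x - z))

section q₀Reduced

variable {a l c A s : ℝ}

lemma mul_q₀Reduced (a l c A s : ℝ) :
    (l - a) * exp ((l - a) * s) * q₀Reduced a l c A s =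
      (l - a) * c * (exp (l * s) - 1) - A * (l - a) * (exp ((l - a) * s) - 1) := by
  have h₁ : exp (a * s) * exp ((l - a) * s) = exp (l * s) := by rw [← exp_add]; ring_nf
  have h₂ : exp ((a - l) * s) * exp ((l - a) * s) = 1 := by
    rw [← exp_add]; ring_nf; exact exp_zero
  rw [q₀Reduced]
  linear_combination (l - a) * c * h₁ + (l - a) * (A - c) * h₂

lemma q₀Reduced_pos (ha : 0 < a) (hal : a < l) (hc : 0 < c) (hA : A * (l - a) ≤ c * l)
    (hs : 0 < s) : 0 < q₀Reduced a l c A s := by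
  have hla : 0 < l - a := sub_pos.2 hal
  have hexp : 0 ≤ exp ((l - a) * s) - 1 := by
    rw [sub_nonneg, one_le_exp_iff]; positivity
  have key : 0 < (l - a) * exp ((l - a) * s) * q₀Reduced a l c A s := by
    rw [mul_q₀Reduced]
    nlinarith [mul_le_mul_of_nonneg_right hA hexp,
      mul_exp_mul_sub_one_lt hla (sub_lt_self l ha) hs.ne']
  exact pos_of_mul_pos_right key (by positivity)

lemma q₀Reduced_neg (ha : 0 < a) (hal : a < l) (hc : 0 < c)
    (hA : A * (l - a) = c * l * exp (a * s)) (hs : 0 < s) : q₀Reduced a l c A s < 0 := by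
  have key : (l - a) * exp ((l - a) * s) * q₀Reduced a l c A s < 0 := by
    have h₁ : exp (a * s) * exp ((l - a) * s) = exp (l * s) := by rw [← exp_add]; ring_nf
    rw [mul_q₀Reduced, hA, show c * l * exp (a * s) * (exp ((l - a) * s) - 1) =
      c * l * (exp (l * s) - exp (a * s)) by rw [← h₁]; ring]
    nlinarith [mul_exp_mul_sub_one_lt ha hal hs.ne']
  exact neg_of_mul_neg_right key (by have := sub_pos.2 hal; positivity)

lemma convexOn_q₀Reduced (hcA : c ≤ A) (hc : 0 ≤ c) : ConvexOn ℝ univ (q₀Reduced a l c A) := by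
  have := (((convexOn_exp_mul a).smul hc).add
    ((convexOn_exp_mul (a - l)).smul (sub_nonneg.2 hcA))).add_const (-A)
  refine this.congr fun s _ => ?_
  simp only [q₀Reduced, Pi.add_apply, smul_eq_mul]
  ring

lemma exists_q₀Reduced_nonneg_iff {s₀ : ℝ} (ha : 0 < a) (hal : a < l) (hc : 0 < c)
    (hA : A * (l - a) = c * l * exp (a * s₀)) (hs₀ : 0 < s₀) :
    ∃ w, s₀ < w ∧ ∀ s, 0 < s → (0 ≤ q₀Reduced a l c A s ↔ w ≤ s) := by
  have hcA : c < A := by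
    refine lt_of_mul_lt_mul_right ?_ (sub_pos.2 hal).le
    have hcl : 0 < c * l := mul_pos hc (ha.trans hal)
    rw [hA]
    nlinarith [mul_le_mul_of_nonneg_left (one_le_exp (mul_pos ha hs₀).le) hcl.le, mul_pos hc ha]
  set X := s₀ + A / (a * c)
  have hX : 0 < q₀Reduced a l c A X := by
    have hlin : a * X + 1 ≤ exp (a * X) := add_one_le_exp _
    have hAX : c * (a * X) = c * a * s₀ + A := by simp only [X]; field_simp
    have := mul_nonneg (sub_nonneg.2 hcA.le) (exp_pos ((a - l) * X)).le
    rw [q₀Reduced]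
    nlinarith [mul_pos (mul_pos hc ha) hs₀]
  obtain ⟨w, hs₀w, hw, hneg, hpos⟩ := (convexOn_q₀Reduced hcA.le hc.le).exists_sign_change
    (by unfold q₀Reduced; fun_prop) (p := 0) (by simp [q₀Reduced]) (q₀Reduced_neg ha hal hc hA hs₀)
    hX (lt_add_of_pos_right _ (div_pos (hc.trans hcA) (mul_pos ha hc)))
  refine ⟨w, hs₀w, fun s hs =>
    ⟨fun h => not_lt.1 fun hsw => (hneg s hs hsw).not_ge h, fun hws => ?_⟩⟩
  rcases hws.eq_or_lt with rfl | hws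
  exacts [hw.ge, (hpos s hws).le]

end q₀Reduced

section q₁Reduced

variable {a ρ xh z x : ℝ}

lemma q₁Reduced_self : q₁Reduced a ρ xh z z = ρ * (exp (a * z) - exp (a * xh)) := by
  rw [q₁Reduced]; ring

lemma convexOn_q₁Reduced : ConvexOn ℝ univ (q₁Reduced a ρ xh z) := by
  have := ((convexOn_exp_mul a).add ((LinearMap.mul ℝ ℝ (-((1 - ρ) * a * exp (a * xh)))).convexOn
    convex_univ)).add_const (-(ρ * exp (a * xh)) - (1 - ρ) * (exp (a * z) - a * exp (a * xh) * z))
  refine this.congr fun x _ => ?_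
  simp only [q₁Reduced, Pi.add_apply, LinearMap.mul_apply']
  ring

lemma q₁Reduced_pos (ha : 0 < a) (hρ : 0 < ρ) (hz : xh ≤ z) (hzx : z ≤ x) (hx : xh < x) :
    0 < q₁Reduced a ρ xh z x := by
  rcases hzx.eq_or_lt with rfl | hzx
  · rw [q₁Reduced_self]
    exact mul_pos hρ (sub_pos.2 (exp_lt_exp.2 (mul_lt_mul_of_pos_left hx ha)))
  · have hE : exp (a * xh) ≤ exp (a * z) := exp_le_exp.2 (mul_le_mul_of_nonneg_left hz ha.le)
    have hxz : 0 < x - z := sub_pos.2 hzx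
    rw [q₁Reduced]
    nlinarith [exp_mul_tangent_le a z x, mul_nonneg (sub_nonneg.2 hE) hxz.le,
      mul_pos hρ (mul_pos (mul_pos ha (exp_pos (a * xh))) hxz), mul_nonneg hρ.le (sub_nonneg.2 hE)]

lemma exists_q₁Reduced_nonpos_iff (ha : 0 < a) (hρ : 0 < ρ) (hρ₁ : ρ < 1) (hz : z < xh) :
    ∃ w, xh < w ∧ ∀ x, z ≤ x → (q₁Reduced a ρ xh z x ≤ 0 ↔ x ≤ w) := by
  have hE : 0 < exp (a * xh) := exp_pos _
  have hzneg : q₁Reduced a ρ xh z z < 0 := by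
    rw [q₁Reduced_self]
    exact mul_neg_of_pos_of_neg hρ (sub_neg.2 (exp_lt_exp.2 (mul_lt_mul_of_pos_left hz ha)))
  have hxhneg : q₁Reduced a ρ xh z xh < 0 := by
    have := exp_mul_tangent_lt (x := z) ha.ne' hz.ne
    rw [q₁Reduced]
    nlinarith [mul_lt_mul_of_pos_left this (sub_pos.2 hρ₁)]
  set X := xh + (1 - q₁Reduced a ρ xh z xh) / (ρ * a * exp (a * xh))
  have hX : 0 < q₁Reduced a ρ xh z X := by
    have hgrowth : q₁Reduced a ρ xh z xh + ρ * a * exp (a * xh) * (X - xh) ≤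
        q₁Reduced a ρ xh z X := by
      simp only [q₁Reduced]
      nlinarith [exp_mul_tangent_le a xh X]
    have : ρ * a * exp (a * xh) * (X - xh) = 1 - q₁Reduced a ρ xh z xh := by
      simp only [X]; field_simp; ring
    linarith
  obtain ⟨w, hxhw, hw, hneg, hpos⟩ := convexOn_q₁Reduced.exists_sign_change
    (by unfold q₁Reduced; fun_prop) hzneg.le hxhneg hX
    (lt_add_of_pos_right _ (div_pos (by linarith) (by positivity)))
  refine ⟨w, hxhw, fun x hzx => ⟨fun h => not_lt.1 fun hwx => (hpos x hwx).not_ge h, fun hxw => ?_⟩⟩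
  rcases hzx.eq_or_lt with rfl | hzx
  · exact hzneg.le
  rcases hxw.eq_or_lt with rfl | hxw
  exacts [hw.le, (hneg x hzx hxw).le]

end q₁Reduced

lemma exists_improved_threshold {a l c A ρ xh z : ℝ} (ha : 0 < a) (hal : a < l) (hc : 0 < c)
    (hρ : 0 < ρ) (hρ₁ : ρ < 1) (hA : A * (l - a) = c * l * exp (a * (z - xh))) :
    ∃ w, (∀ x < z, (0 ≤ q₀Reduced a l c A (z - x) ↔ x ≤ w)) ∧
      (∀ x, z ≤ x → (q₁Reduced a ρ xh z x ≤ 0 ↔ x ≤ w)) ∧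
      (z < xh → xh < w) ∧ (xh < z → w < xh) ∧ (z = xh → w = xh) := by
  have hcl : 0 ≤ c * l := by have := ha.trans hal; positivity
  rcases lt_trichotomy z xh with hz | rfl | hz
  · have hA' : A * (l - a) ≤ c * l := by
      rw [hA]
      exact mul_le_of_le_one_right hcl (exp_le_one_iff.2 (by nlinarith))
    obtain ⟨w, hxhw, hf⟩ := exists_q₁Reduced_nonpos_iff ha hρ hρ₁ hz
    refine ⟨w, fun x hx => iff_of_true (q₀Reduced_pos ha hal hc hA' (sub_pos.2 hx)).le
      (by linarith), hf, fun _ => hxhw, fun h => absurd h hz.not_gt, fun h => absurd h hz.ne⟩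
  · have hA' : A * (l - a) ≤ c * l := by rw [hA, sub_self, mul_zero, exp_zero, mul_one]
    refine ⟨z, fun x hx => iff_of_true (q₀Reduced_pos ha hal hc hA' (sub_pos.2 hx)).le hx.le,
      fun x hzx => ?_, fun h => absurd h (lt_irrefl z), fun h => absurd h (lt_irrefl z),
      fun _ => rfl⟩
    rcases hzx.eq_or_lt with rfl | hzx
    · simp [q₁Reduced_self]
    · exact iff_of_false (q₁Reduced_pos ha hρ le_rfl hzx.le hzx).not_ge hzx.not_ge
  · obtain ⟨w, hw, hg⟩ := exists_q₀Reduced_nonneg_iff ha hal hc hA (sub_pos.2 hz)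
    refine ⟨z - w, fun x hx => ?_, fun x hzx => iff_of_false
      (q₁Reduced_pos ha hρ hz.le hzx (hz.trans_le hzx)).not_ge (by linarith),
      fun h => absurd h hz.not_gt, fun _ => by linarith, fun h => absurd h hz.ne'⟩
    rw [hg _ (sub_pos.2 hx)]
    constructor <;> intro <;> linarith

lemma sq_mul_root_add_eq_sqrt {μ σ β l : ℝ} (hσ : 0 < σ)
    (hl : l = (-μ + √(μ ^ 2 + 2 * β * σ ^ 2)) / σ ^ 2) :
    σ ^ 2 * l + μ = √(μ ^ 2 + 2 * β * σ ^ 2) := by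
  rw [hl]; field_simp; ring

lemma root_quadratic_eq {μ σ β l : ℝ} (hσ : 0 < σ) (hβ : 0 < β)
    (hl : l = (-μ + √(μ ^ 2 + 2 * β * σ ^ 2)) / σ ^ 2) :
    σ ^ 2 * l ^ 2 + 2 * μ * l = 2 * β := by
  have h := congrArg (· ^ 2) (sq_mul_root_add_eq_sqrt hσ hl)
  simp only [sq_sqrt (by positivity : 0 ≤ μ ^ 2 + 2 * β * σ ^ 2)] at h
  refine mul_left_cancel₀ (pow_pos hσ 2).ne' ?_
  linear_combination h

lemma lt_root {μ σ β a l : ℝ} (hσ : 0 < σ) (h : μ * a + (1/2) * σ ^ 2 * a ^ 2 < β)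
    (hl : l = (-μ + √(μ ^ 2 + 2 * β * σ ^ 2)) / σ ^ 2) : a < l := by
  have : σ ^ 2 * a + μ < σ ^ 2 * l + μ := by
    rw [sq_mul_root_add_eq_sqrt hσ hl]
    exact lt_sqrt_of_sq_lt (by nlinarith [pow_pos hσ 2])
  exact lt_of_mul_lt_mul_left (by linarith) (pow_pos hσ 2).le

lemma mul_exp_mul_xhat_eq {a l c D xh : ℝ} (ha : 0 < a) (hal : a < l) (hc : 0 < c) (hD : 0 < D)
    (hxh : xh = (1/a) * log (l * c * D / (l * a - a ^ 2))) :
    a * (l - a) * exp (a * xh) = c * l * D := by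
  have hla : 0 < l - a := sub_pos.2 hal
  rw [show l * a - a ^ 2 = a * (l - a) by ring] at hxh
  rw [hxh, show a * (1 / a * log (l * c * D / (a * (l - a)))) =
    log (l * c * D / (a * (l - a))) by field_simp, exp_log (by have := ha.trans hal; positivity)]
  field_simp

lemma one_sub_mul_mul_eq {μ σ β a l D ρ : ℝ} (hD : D = β - μ * a - (1/2) * σ ^ 2 * a ^ 2)
    (hchar : σ ^ 2 * l ^ 2 + 2 * μ * l = 2 * β) (hρ : 2 * D * ρ = σ ^ 2 * a * (l - a)) :
    (1 - ρ) * l * D = β * (l - a) := by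
  linear_combination (-l / 2) * hρ - a / 2 * hchar + l * hD

lemma ρ_mem_Ioo {μ σ β a l D ρ : ℝ} (hσ : 0 < σ) (ha : 0 < a) (hal : a < l) (hβ : 0 < β)
    (hD0 : 0 < D) (hD : D = β - μ * a - (1/2) * σ ^ 2 * a ^ 2)
    (hchar : σ ^ 2 * l ^ 2 + 2 * μ * l = 2 * β)
    (hρ : 2 * D * ρ = σ ^ 2 * a * (l - a)) : ρ ∈ Ioo 0 1 := by
  have hla : 0 < l - a := sub_pos.2 hal
  have hlD : 0 < l * D := mul_pos (ha.trans hal) hD0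
  constructor
  · nlinarith [mul_pos (mul_pos (pow_pos hσ 2) ha) hla]
  · nlinarith [one_sub_mul_mul_eq hD hchar hρ, mul_pos hβ hla]

lemma mul_exp_mul_sub_eq {a l c D K₁ xh : ℝ} (hK₁ : K₁ * D = 1)
    (hE : a * (l - a) * exp (a * xh) = c * l * D) (z : ℝ) :
    K₁ * a * exp (a * z) * (l - a) = c * l * exp (a * (z - xh)) := by
  have : exp (a * z) = exp (a * xh) * exp (a * (z - xh)) := by rw [← exp_add]; ring_nf
  linear_combination (K₁ * a * (l - a)) * this + K₁ * exp (a * (z - xh)) * hE +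
    c * l * exp (a * (z - xh)) * hK₁

lemma q₀_branch_nonneg_iff {a l c K B z x : ℝ}
    (hB : B * l * exp (l * z) = c - K * a * exp (a * z)) :
    0 ≤ c - (K * a * exp (a * x) + B * l * exp (l * x)) ↔
      0 ≤ q₀Reduced a l c (K * a * exp (a * z)) (z - x) := by
  have h₁ : exp (a * (x - z)) * exp (a * (z - x)) = 1 := by rw [← exp_add]; ring_nf; exact exp_zero
  have h₂ : exp (a * (x - z)) * exp ((a - l) * (z - x)) * exp (l * z) = exp (l * x) := by
    rw [← exp_add, ← exp_add]; ring_nf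
  have h₃ : exp (a * z) * exp (a * (x - z)) = exp (a * x) := by rw [← exp_add]; ring_nf
  have h : c - (K * a * exp (a * x) + B * l * exp (l * x)) =
      exp (a * (x - z)) * q₀Reduced a l c (K * a * exp (a * z)) (z - x) := by
    rw [q₀Reduced]
    linear_combination -c * h₁ + K * a * h₃ + B * l * h₂ -
      exp (a * (x - z)) * exp ((a - l) * (z - x)) * hB
  rw [h, mul_nonneg_iff_of_pos_left (exp_pos _)]

lemma q₁_branch_eq {μ σ c a β l K₁ B xh z D ρ : ℝ} (hl : l ≠ 0) (hD0 : D ≠ 0)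
    (hD : D = β - μ * a - (1/2) * σ ^ 2 * a ^ 2)
    (hchar : σ ^ 2 * l ^ 2 + 2 * μ * l = 2 * β) (hK₁ : K₁ * D = 1)
    (hE : a * (l - a) * exp (a * xh) = c * l * D) (hρ : 2 * D * ρ = σ ^ 2 * a * (l - a))
    (hB : B * l * exp (l * z) = c - K₁ * a * exp (a * z)) (x : ℝ) :
    exp (a * x) - β * (c * (x - z) + K₁ * exp (a * z) + B * exp (l * z)) + μ * c =
      q₁Reduced a ρ xh z x := by
  have hρl := one_sub_mul_mul_eq hD hchar hρ
  have hρE : ρ * exp (a * xh) = σ ^ 2 * c * l / 2 := by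
    refine mul_left_cancel₀ hD0 ?_
    linear_combination (exp (a * xh) / 2) * hρ + σ ^ 2 / 2 * hE
  have hβc : β * c = (1 - ρ) * a * exp (a * xh) := by
    refine mul_left_cancel₀ (mul_ne_zero hl hD0) ?_
    linear_combination -(a * exp (a * xh)) * hρl - β * hE
  have hconst : β * (K₁ * exp (a * z) + B * exp (l * z)) - μ * c =
      ρ * exp (a * xh) + (1 - ρ) * exp (a * z) := by
    refine mul_left_cancel₀ (mul_ne_zero hl hD0) ?_
    linear_combination (l - a) * β * exp (a * z) * hK₁ + D * β * hB - exp (a * z) * hρl -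
      l * D * hρE - D * c / 2 * hchar
  rw [q₁Reduced]
  linear_combination -(x - z) * hβc - hconst

theorem stmt_18_general
    (μ σ c a β : ℝ)
    (hσ : σ > 0) (hc : c > 0) (ha : a > 0) (hβ : β > 0)
    (hβ' : β > μ * a + (1/2) * σ^2 * a^2)
    (lam₂ K₁ xhat : ℝ)
    (hlam₂ : lam₂ = (-μ + Real.sqrt (μ^2 + 2*β*σ^2)) / σ^2)
    (hK₁ : K₁ = 1 / (β - μ*a - (1/2)*σ^2*a^2))
    (hxhat : xhat = (1/a) * Real.log (lam₂*c*(β - μ*a - (1/2)*σ^2*a^2) / (lam₂*a - a^2)))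
    (K₂ : ℝ → ℝ)
    (hK₂ : ∀ z, K₂ z = (c - K₁*a*Real.exp (a*z)) / (lam₂ * Real.exp (lam₂*z)))
    (q₀ q₁ : ℝ → ℝ → ℝ)
    (hq₀ : ∀ x z, q₀ x z = if x < z then c - (K₁*a*Real.exp (a*x) + K₂ z * lam₂ * Real.exp (lam₂*x)) else 0)
    (hq₁ : ∀ x z, q₁ x z = if x < z then 0
      else Real.exp (a*x) - β * (c*(x - z) + K₁*Real.exp (a*z) + K₂ z * Real.exp (lam₂*z)) + μ*c)
    :
    ∀ z : ℝ, ∃ w : ℝ,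
      (interior {x : ℝ | q₀ x z ≥ 0 ∧ q₁ x z ≤ 0} = Set.Iio w) ∧
      (∀ w' : ℝ, interior {x : ℝ | q₀ x z ≥ 0 ∧ q₁ x z ≤ 0} = Set.Iio w' → w' = w) ∧
      (z < xhat → w > xhat) ∧ (z > xhat → w < xhat) ∧ (z = xhat → w = xhat) := by
  intro z
  obtain ⟨D, hD⟩ : ∃ D, D = β - μ * a - (1/2) * σ ^ 2 * a ^ 2 := ⟨_, rfl⟩
  rw [← hD] at hK₁ hxhat
  have hD0 : 0 < D := by linarith
  have hK₁D : K₁ * D = 1 := by rw [hK₁]; field_simp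
  have hal : a < lam₂ := lt_root hσ hβ' hlam₂
  have hchar := root_quadratic_eq hσ hβ hlam₂
  have hE := mul_exp_mul_xhat_eq ha hal hc hD0 hxhat
  have hρ : 2 * D * (σ ^ 2 * a * (lam₂ - a) / (2 * D)) = σ ^ 2 * a * (lam₂ - a) := by field_simp
  obtain ⟨hρ₀, hρ₁⟩ := ρ_mem_Ioo hσ ha hal hβ hD0 hD hchar hρ
  have hB : K₂ z * lam₂ * exp (lam₂ * z) = c - K₁ * a * exp (a * z) := by
    rw [hK₂]; field_simp [(ha.trans hal).ne']
  obtain ⟨w, hg, hf, h₁, h₂, h₃⟩ :=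
    exists_improved_threshold ha hal hc hρ₀ hρ₁ (mul_exp_mul_sub_eq hK₁D hE z)
  have hS : {x | q₀ x z ≥ 0 ∧ q₁ x z ≤ 0} = Iic w := by
    ext x
    simp only [mem_ofPred_eq, mem_Iic, hq₀, hq₁, ge_iff_le]
    split_ifs with hx
    · rw [q₀_branch_nonneg_iff hB, hg x hx, and_iff_left le_rfl]
    · rw [q₁_branch_eq (ha.trans hal).ne' hD0.ne' hD hchar hK₁D hE hρ hB,
        hf x (not_lt.1 hx), and_iff_right le_rfl]
  refine ⟨w, by rw [hS, interior_Iic], fun w' hw' => ?_, h₁, h₂, h₃⟩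
  rw [hS, interior_Iic] at hw'
  exact le_antisymm (Iio_subset_Iio_iff.1 hw'.ge) (Iio_subset_Iio_iff.1 hw'.le)

theorem stmt_18
    (μ σ c a β : ℝ)
    (hσ : σ > 0) (hc : c > 0) (ha : a > 0) (hβ : β > 0)
    (hβ' : β > μ * a + (1/2) * σ^2 * a^2)
    (lam₁ lam₂ K₁ xhat C₂ : ℝ)
    (hlam₁ : lam₁ = (-μ - Real.sqrt (μ^2 + 2*β*σ^2)) / σ^2)
    (hlam₂ : lam₂ = (-μ + Real.sqrt (μ^2 + 2*β*σ^2)) / σ^2)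
    (hK₁ : K₁ = 1 / (β - μ*a - (1/2)*σ^2*a^2))
    (hxhat : xhat = (1/a) * Real.log (lam₂*c*(β - μ*a - (1/2)*σ^2*a^2) / (lam₂*a - a^2)))
    (hC₂ : C₂ = -(a^2 / (lam₂^2 * (β - μ*a - (1/2)*σ^2*a^2))) * Real.exp ((a - lam₂) * xhat))
    (K₂ : ℝ → ℝ)
    (hK₂ : ∀ z, K₂ z = (c - K₁*a*Real.exp (a*z)) / (lam₂ * Real.exp (lam₂*z)))
    (q₀ q₁ : ℝ → ℝ → ℝ)
    (hq₀ : ∀ x z, q₀ x z = if x < z then c - (K₁*a*Real.exp (a*x) + K₂ z * lam₂ * Real.exp (lam₂*x)) else 0)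
    (hq₁ : ∀ x z, q₁ x z = if x < z then 0
      else Real.exp (a*x) - β * (c*(x - z) + K₁*Real.exp (a*z) + K₂ z * Real.exp (lam₂*z)) + μ*c)
    :
    ∀ z : ℝ, ∃ w : ℝ,
      (interior {x : ℝ | q₀ x z ≥ 0 ∧ q₁ x z ≤ 0} = Set.Iio w) ∧
      (∀ w' : ℝ, interior {x : ℝ | q₀ x z ≥ 0 ∧ q₁ x z ≤ 0} = Set.Iio w' → w' = w) ∧
      (z < xhat → w > xhat) ∧ (z > xhat → w < xhat) ∧ (z = xhat → w = xhat) :=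
  stmt_18_general μ σ c a β hσ hc ha hβ hβ' lam₂ K₁ xhat hlam₂ hK₁ hxhat K₂ hK₂ q₀ q₁ hq₀ hq₁
end
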